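/- arXiv:2304.01803 — 2 statements merged into one kernel-verified Lean document; each statement's English description precedes it below -/
import Mathlib

section
/- Assume Y is complete with doubling measure ν, 0 < θ < 1, 1 ≤ p < ∞, and 0 < 2r ≤ R. Then cap_{θ,p}(B(x_0,r), B(x_0,R)) ≤ C · min{ ν(B(x_0,r))/r^{θp}, ν(B(x_0,R))/R^{θp} }, with C depending only on θ, p and the doubling constant. -/
open MeasureTheory Metric Set ENNReal

open Classical in

/-- Pointwise Besov energy `∫_Y |u(x)-u(y)|^p / d(x,y)^{θp} · dν(y)/ν(B(x,d(x,y)))`. -/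
noncomputable def besovPointEnergy {Y : Type*} [MetricSpace Y] [MeasurableSpace Y]
    (ν : Measure Y) (θ p : ℝ) (u : Y → ℝ) (x : Y) : ℝ≥0∞ :=
  ∫⁻ y, (if x = y then 0 else
    ENNReal.ofReal (|u x - u y| ^ p) /
      (ENNReal.ofReal (dist x y ^ (θ * p)) * ν (ball x (dist x y)))) ∂ν

/-- The Besov seminorm to the power `p`:
`[u]_{θ,p}^p = ∫_Y ∫_Y |u(x)-u(y)|^p / d(x,y)^{θp} · dν(y) dν(x)/ν(B(x,d(x,y)))`. -/
noncomputable def besovEnergy {Y : Type*} [MetricSpace Y] [MeasurableSpace Y]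
    (ν : Measure Y) (θ p : ℝ) (u : Y → ℝ) : ℝ≥0∞ :=
  ∫⁻ x, besovPointEnergy ν θ p u x ∂ν

/-- `u` is admissible for the Besov norm-capacity of `E`:
`0 ≤ u ≤ 1` everywhere and `u = 1` in a neighbourhood of `E`. -/
def normAdmissible {Y : Type*} [MetricSpace Y] (E : Set Y) (u : Y → ℝ) : Prop :=
  (∀ z, 0 ≤ u z ∧ u z ≤ 1) ∧ ∃ G : Set Y, IsOpen G ∧ E ⊆ G ∧ ∀ z ∈ G, u z = 1

/-- The Besov norm-capacity `C_{θ,p}(E) = inf (‖u‖_{L^p}^p + [u]_{θ,p}^p)` over admissible `u`. -/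
noncomputable def besovNormCap {Y : Type*} [MetricSpace Y] [MeasurableSpace Y]
    (ν : Measure Y) (θ p : ℝ) (E : Set Y) : ℝ≥0∞ :=
  ⨅ (u : Y → ℝ) (_ : normAdmissible E u),
    (∫⁻ x, ENNReal.ofReal (|u x| ^ p) ∂ν) + besovEnergy ν θ p u

/-- `u` is admissible for the Besov condenser capacity of `(E, Ω)`:
`0 ≤ u ≤ 1` everywhere, `u = 1` in a neighbourhood of `E`, and `supp u ⋐ Ω`. -/
def condAdmissible {Y : Type*} [MetricSpace Y] (E Ω : Set Y) (u : Y → ℝ) : Prop :=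
  (∀ z, 0 ≤ u z ∧ u z ≤ 1) ∧ (∃ G : Set Y, IsOpen G ∧ E ⊆ G ∧ ∀ z ∈ G, u z = 1) ∧
    IsCompact (tsupport u) ∧ tsupport u ⊆ Ω

/-- The Besov condenser capacity `cap_{θ,p}(E,Ω) = inf [u]_{θ,p}^p` over admissible `u`. -/
noncomputable def besovCondCap {Y : Type*} [MetricSpace Y] [MeasurableSpace Y]
    (ν : Measure Y) (θ p : ℝ) (E Ω : Set Y) : ℝ≥0∞ :=
  ⨅ (u : Y → ℝ) (_ : condAdmissible E Ω u), besovEnergy ν θ p u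

/-- `ν` is doubling with constant `C`. -/
def IsDoublingWith {Y : Type*} [MetricSpace Y] [MeasurableSpace Y]
    (ν : Measure Y) (C : ℝ) : Prop :=
  ∀ (x : Y) (r : ℝ), 0 < r → ν (ball x (2 * r)) ≤ ENNReal.ofReal C * ν (ball x r)

/-- `ν` is positive and finite on balls. -/
def BallsPosFinite {Y : Type*} [MetricSpace Y] [MeasurableSpace Y] (ν : Measure Y) : Prop :=
  ∀ (x : Y) (r : ℝ), 0 < r → 0 < ν (ball x r) ∧ ν (ball x r) < ∞

/-- `X` is uniformly perfect at `x` with constant `κ`. -/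
def UnifPerfectAt {Y : Type*} [MetricSpace Y] (x : Y) (κ : ℝ) : Prop :=
  ∀ r : ℝ, 0 < r → ball x (κ * r) ≠ univ → (ball x (κ * r) \ ball x r).Nonempty

/-
The capacity is tested with the piecewise linear cutoff `ballCutoff x₀ ρ`, equal to `1` on
`B(x₀, ρ/2)`, vanishing off `B(x₀, 3ρ/4)` and `(4/ρ)`-Lipschitz, once with `ρ = 2r` and once
with `ρ = R`; doubling then compares `ν(B(x₀, 2r)) / (2r)^{θp}` with `ν(B(x₀, r)) / r^{θp}`.

The energy of such a cutoff is at most a constant times `ν(B(x₀, ρ)) / ρ^{θp}`. For fixed `x`,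
split `y` into the dyadic annuli `ρ 2ⁿ ≤ d(x, y) < ρ 2ⁿ⁺¹`: by doubling each annulus has measure
comparable to `ν(B(x, ρ 2ⁿ))`, which cancels the kernel, so the annuli contribute geometric series
in `2^{θp-p}` (inside, by the Lipschitz bound) and `2^{-θp}` (outside, by `|u| ≤ 1`). Integrating
in `x` over `B(x₀, 2ρ)` costs one more doubling factor; for `x` in a far annulus
`2b ≤ d(x₀, x) < 4b`, only `y ∈ B(x₀, ρ)` contribute, at distance `≥ b`, which again sums to a
geometric series in `2^{-θp}`.

Admissible functions need compact support; in a complete doubling space closed balls are compact,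
since a packing argument bounds the number of `ε`-separated points in a ball.
-/

lemma totallyBounded_of_forall_isSeparated_finite {X : Type*} [PseudoEMetricSpace X] {s : Set X}
    (h : ∀ ε : NNReal, 0 < ε → ∀ C ⊆ s, IsSeparated ε C → C.Finite) : TotallyBounded s := by
  rw [EMetric.totallyBounded_iff']
  intro ε hε
  obtain ⟨δ, hδ0, hδε⟩ := ENNReal.lt_iff_exists_nnreal_btwn.1 hε
  obtain ⟨N, hN⟩ : ∃ N, Maximal (fun N ↦ N ⊆ s ∧ IsSeparated δ N) N := by
    refine zorn_subset _ fun c hc hchain ↦ ⟨(⋃₀ c), ⟨sUnion_subset fun N hN ↦ (hc hN).1, ?_⟩,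
      fun N hN ↦ subset_sUnion_of_mem hN⟩
    exact (pairwise_sUnion hchain.directedOn).2 fun N hN ↦ (hc hN).2
  refine ⟨N, hN.prop.1, h δ (by exact_mod_cast hδ0) N hN.prop.1 hN.prop.2, ?_⟩
  refine (isCover_iff_subset_iUnion_closedEBall.1 (IsCover.of_maximal_isSeparated hN)).trans ?_
  exact iUnion₂_mono fun y _ z hz ↦ lt_of_le_of_lt hz hδε

lemma tsum_ofReal_mul_geometric {A q : ℝ} (hA : 0 ≤ A) (hq0 : 0 ≤ q) (hq1 : q < 1) :
    ∑' j : ℕ, ENNReal.ofReal (A * q ^ j) = ENNReal.ofReal (A / (1 - q)) := by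
  rw [← ENNReal.ofReal_tsum_of_nonneg (fun j ↦ by positivity)
    ((summable_geometric_of_lt_one hq0 hq1).mul_left A), tsum_mul_left,
    tsum_geometric_of_lt_one hq0 hq1, div_eq_mul_inv]

lemma one_div_rpow_mul_two_pow {ρ : ℝ} (hρ : 0 < ρ) (s : ℝ) (j : ℕ) :
    1 / (ρ * 2 ^ j) ^ s = 1 / ρ ^ s * (2 ^ (-s)) ^ j := by
  rw [Real.mul_rpow hρ.le (by positivity), ← Real.rpow_pow_comm zero_le_two,
    Real.rpow_neg zero_le_two, inv_pow, one_div_mul_eq_div, one_div, mul_inv, div_eq_mul_inv,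
    mul_comm]

lemma rpow_div_rpow_div_two_pow {ρ : ℝ} (hρ : 0 < ρ) (p s : ℝ) (j : ℕ) :
    (4 / 2 ^ j) ^ p / (ρ / 2 ^ (j + 1)) ^ s = 4 ^ p * 2 ^ s / ρ ^ s * (2 ^ (s - p)) ^ j := by
  rw [Real.div_rpow (by norm_num) (by positivity), Real.div_rpow hρ.le (by positivity), pow_succ,
    Real.mul_rpow (by positivity) zero_le_two, ← Real.rpow_pow_comm zero_le_two,
    ← Real.rpow_pow_comm zero_le_two, Real.rpow_sub two_pos, div_pow]
  have : (0:ℝ) < 2 ^ p := by positivity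
  have : (0:ℝ) < 2 ^ s := by positivity
  have : (0:ℝ) < ρ ^ s := by positivity
  field_simp

lemma ENNReal.inv_le_mul_inv_of_le_mul {M m c : ℝ≥0∞} (hM0 : M ≠ 0) (hMtop : M ≠ ∞)
    (hm0 : m ≠ 0) (hmtop : m ≠ ∞) (h : M ≤ c * m) : m⁻¹ ≤ c * M⁻¹ := by
  rw [← div_eq_mul_inv, ENNReal.le_div_iff_mul_le (.inl hM0) (.inl hMtop)]
  calc m⁻¹ * M ≤ m⁻¹ * (c * m) := by gcongr
    _ = c := by rw [mul_comm c, ← mul_assoc, ENNReal.inv_mul_cancel hm0 hmtop, one_mul]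

noncomputable def besovPointConst (θ p : ℝ) : ℝ :=
  1 / (1 - 2 ^ (-(θ * p))) + 4 ^ p * 2 ^ (θ * p) / (1 - 2 ^ (θ * p - p))

lemma besovPointConst_pos {θ p : ℝ} (hθ0 : 0 < θ) (hθ1 : θ < 1) (hp : 0 < p) :
    0 < besovPointConst θ p := by
  have hq₁ : (2 : ℝ) ^ (θ * p - p) < 1 :=
    Real.rpow_lt_one_of_one_lt_of_neg one_lt_two (by nlinarith)
  have hq₂ : (2 : ℝ) ^ (-(θ * p)) < 1 :=
    Real.rpow_lt_one_of_one_lt_of_neg one_lt_two (by nlinarith)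
  unfold besovPointConst
  have := sub_pos.2 hq₁
  have := sub_pos.2 hq₂
  positivity

noncomputable def besovEnergyConst (θ p Cν : ℝ) : ℝ :=
  Cν ^ 2 * besovPointConst θ p + Cν ^ 3 / (1 - 2 ^ (-(θ * p)))

lemma besovEnergyConst_pos {θ p Cν : ℝ} (hθ0 : 0 < θ) (hθ1 : θ < 1) (hp : 0 < p) (hC : 0 < Cν) :
    0 < besovEnergyConst θ p Cν := by
  have := besovPointConst_pos hθ0 hθ1 hp
  have := sub_pos.2 (Real.rpow_lt_one_of_one_lt_of_neg one_lt_two (by nlinarith) :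
    (2 : ℝ) ^ (-(θ * p)) < 1)
  unfold besovEnergyConst
  positivity

section Metric

variable {Y : Type*} [MetricSpace Y]

lemma condAdmissible.mono {E E' Ω Ω' : Set Y} {u : Y → ℝ} (hu : condAdmissible E Ω u)
    (hE : E' ⊆ E) (hΩ : Ω ⊆ Ω') : condAdmissible E' Ω' u := by
  obtain ⟨h01, ⟨G, hG, hEG, hG1⟩, hcpt, hsupp⟩ := hu
  exact ⟨h01, ⟨G, hG, hE.trans hEG, hG1⟩, hcpt, hsupp.trans hΩ⟩

noncomputable def ballCutoff (x₀ : Y) (ρ : ℝ) (z : Y) : ℝ :=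
  min 1 (max (3 - 4 / ρ * dist x₀ z) 0)

lemma ballCutoff_nonneg (x₀ : Y) (ρ : ℝ) (z : Y) : 0 ≤ ballCutoff x₀ ρ z :=
  le_min zero_le_one (le_max_right _ _)

lemma ballCutoff_le_one (x₀ : Y) (ρ : ℝ) (z : Y) : ballCutoff x₀ ρ z ≤ 1 :=
  min_le_left _ _

lemma abs_ballCutoff_sub_le (x₀ : Y) {ρ : ℝ} (hρ : 0 ≤ ρ) (a b : Y) :
    |ballCutoff x₀ ρ a - ballCutoff x₀ ρ b| ≤ 4 / ρ * dist a b := by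
  calc |ballCutoff x₀ ρ a - ballCutoff x₀ ρ b|
      ≤ |max (3 - 4 / ρ * dist x₀ a) 0 - max (3 - 4 / ρ * dist x₀ b) 0| := by
        refine (abs_min_sub_min_le_max _ _ _ _).trans ?_
        rw [sub_self, abs_zero, max_eq_right (abs_nonneg _)]
    _ ≤ |(3 - 4 / ρ * dist x₀ a) - (3 - 4 / ρ * dist x₀ b)| := abs_max_sub_max_le_abs _ _ _
    _ = 4 / ρ * |dist x₀ b - dist x₀ a| := by
        rw [show (3 - 4 / ρ * dist x₀ a) - (3 - 4 / ρ * dist x₀ b) =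
          4 / ρ * (dist x₀ b - dist x₀ a) by ring, abs_mul, abs_of_nonneg (by positivity)]
    _ ≤ 4 / ρ * dist a b := by
        gcongr
        simpa only [dist_comm] using abs_dist_sub_le b a x₀

lemma ballCutoff_eq_one (x₀ : Y) {ρ : ℝ} (hρ : 0 < ρ) {z : Y} (hz : dist x₀ z < ρ / 2) :
    ballCutoff x₀ ρ z = 1 := by
  have : 4 / ρ * dist x₀ z < 2 := by
    rw [div_mul_eq_mul_div, div_lt_iff₀ hρ]; linarith
  rw [ballCutoff, max_eq_left (by linarith), min_eq_left (by linarith)]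

lemma ballCutoff_eq_zero (x₀ : Y) {ρ : ℝ} (hρ : 0 < ρ) {z : Y} (hz : 3 * ρ / 4 ≤ dist x₀ z) :
    ballCutoff x₀ ρ z = 0 := by
  have : 3 ≤ 4 / ρ * dist x₀ z := by
    rw [div_mul_eq_mul_div, le_div_iff₀ hρ]; linarith
  rw [ballCutoff, max_eq_right (by linarith), min_eq_right zero_le_one]

lemma tsupport_ballCutoff_subset (x₀ : Y) {ρ : ℝ} (hρ : 0 < ρ) :
    tsupport (ballCutoff x₀ ρ) ⊆ closedBall x₀ (3 * ρ / 4) := by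
  refine closure_minimal (fun z hz ↦ ?_) isClosed_closedBall
  rw [mem_closedBall, dist_comm]
  by_contra! h
  exact hz (ballCutoff_eq_zero x₀ hρ h.le)

lemma condAdmissible_ballCutoff [ProperSpace Y] (x₀ : Y) {ρ : ℝ} (hρ : 0 < ρ) :
    condAdmissible (ball x₀ (ρ / 2)) (ball x₀ ρ) (ballCutoff x₀ ρ) := by
  refine ⟨fun z ↦ ⟨ballCutoff_nonneg x₀ ρ z, ballCutoff_le_one x₀ ρ z⟩,
    ⟨ball x₀ (ρ / 2), isOpen_ball, subset_rfl, fun z hz ↦ ?_⟩,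
    (isCompact_closedBall x₀ _).of_isClosed_subset (isClosed_tsupport _)
      (tsupport_ballCutoff_subset x₀ hρ),
    (tsupport_ballCutoff_subset x₀ hρ).trans (closedBall_subset_ball (by linarith))⟩
  rw [mem_ball, dist_comm] at hz
  exact ballCutoff_eq_one x₀ hρ hz

def annulus (x : Y) (a : ℝ) : Set Y := ball x (2 * a) \ ball x a

lemma exists_mem_annulus_zpow {x y : Y} (hxy : x ≠ y) {ρ : ℝ} (hρ : 0 < ρ) :
    ∃ n : ℤ, y ∈ annulus x (ρ * 2 ^ n) := by
  obtain ⟨n, hn1, hn2⟩ := exists_mem_Ico_zpow (div_pos (dist_pos.2 hxy) hρ) one_lt_two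
  rw [le_div_iff₀ hρ] at hn1
  rw [div_lt_iff₀ hρ, zpow_add_one₀ two_ne_zero] at hn2
  refine ⟨n, ?_, ?_⟩ <;> rw [mem_ball, dist_comm] <;> linarith

lemma compl_ball_subset_iUnion_annulus (x : Y) {ρ : ℝ} (hρ : 0 < ρ) :
    (ball x ρ)ᶜ ⊆ ⋃ j : ℕ, annulus x (ρ * 2 ^ j) := by
  intro y hy
  rw [mem_compl_iff, mem_ball, not_lt, dist_comm] at hy
  obtain ⟨n, hn⟩ := exists_mem_annulus_zpow (dist_pos.1 (hρ.trans_le hy)) hρ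
  have hn2 : dist y x < ρ * 2 ^ (n + 1) := by
    rw [zpow_add_one₀ two_ne_zero]; linarith [mem_ball.1 hn.1]
  have hn0 : 0 ≤ n := by
    have : (1 : ℝ) < 2 ^ (n + 1) := by
      rw [dist_comm] at hy; nlinarith
    have := (one_lt_zpow_iff_right₀ _root_.one_lt_two).1 this
    omega
  lift n to ℕ using hn0
  exact mem_iUnion.2 ⟨n, by simpa using hn⟩

end Metric

section Measure

variable {Y : Type*} [MetricSpace Y] [MeasurableSpace Y] {ν : Measure Y} {Cν : ℝ}

lemma IsDoublingWith.measure_ball_two_pow_mul_le (hd : IsDoublingWith ν Cν) (k : ℕ) (x : Y)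
    {s : ℝ} (hs : 0 < s) :
    ν (ball x (2 ^ k * s)) ≤ ENNReal.ofReal Cν ^ k * ν (ball x s) := by
  induction k with
  | zero => simp
  | succ k ih =>
    calc ν (ball x (2 ^ (k + 1) * s)) = ν (ball x (2 * (2 ^ k * s))) := by ring_nf
      _ ≤ ENNReal.ofReal Cν * ν (ball x (2 ^ k * s)) := hd x _ (by positivity)
      _ ≤ ENNReal.ofReal Cν * (ENNReal.ofReal Cν ^ k * ν (ball x s)) := by gcongr
      _ = ENNReal.ofReal Cν ^ (k + 1) * ν (ball x s) := by ring

lemma IsDoublingWith.finite_of_isSeparated [OpensMeasurableSpace Y] (hd : IsDoublingWith ν Cν)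
    (hν : BallsPosFinite ν) (x₀ : Y) {t : ℝ} (ht : 0 < t) {ε : NNReal} (hε : 0 < ε)
    {C : Set Y} (hCt : C ⊆ closedBall x₀ t) (hC : IsSeparated ε C) : C.Finite := by
  -- `k` is chosen so that `B(x₀, t) ⊆ B(z, 2ᵏ ε / 2)` for every `z ∈ closedBall x₀ t`.
  obtain ⟨k, hk⟩ := pow_unbounded_of_one_lt (4 * t / ε) one_lt_two
  have hεpos : (0 : ℝ) < ε / 2 := by positivity
  have hball : ∀ z ∈ C, ν (ball x₀ t) ≤ ENNReal.ofReal Cν ^ k * ν (ball z (ε / 2)) := by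
    intro z hz
    refine (measure_mono fun y hy ↦ ?_).trans (hd.measure_ball_two_pow_mul_le k z hεpos)
    have hzt : dist z x₀ ≤ t := hCt hz
    rw [div_lt_iff₀ (by positivity)] at hk
    rw [mem_ball] at hy ⊢
    linarith [dist_triangle_right y z x₀]
  have hdisj : Pairwise (Function.onFun Disjoint fun z : C ↦ ball (z : Y) (ε / 2)) := by
    intro a b hab
    refine Set.disjoint_left.2 fun y hya hyb ↦ ?_
    have hsep : (ε : ℝ) < dist (a : Y) b := by
      have h : (ε : ℝ≥0∞) < edist (a : Y) b := hC a.2 b.2 (Subtype.coe_ne_coe.2 hab)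
      rw [edist_dist, ENNReal.coe_nnreal_eq, ENNReal.ofReal_lt_ofReal_iff'] at h
      exact h.1
    linarith [dist_triangle_left (a : Y) b y, mem_ball.1 hya, mem_ball.1 hyb]
  have hunion : (⋃ z : C, ball (z : Y) (ε / 2)) ⊆ ball x₀ (t + ε) := by
    refine iUnion_subset fun z y hy ↦ ?_
    have hzt : dist (z : Y) x₀ ≤ t := hCt z.2
    rw [mem_ball] at hy ⊢
    linarith [dist_triangle y z x₀]
  have hcard : (C.encard : ℝ≥0∞) * ν (ball x₀ t) ≤
      ENNReal.ofReal Cν ^ k * ν (ball x₀ (t + ε)) :=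
    calc (C.encard : ℝ≥0∞) * ν (ball x₀ t) = ∑' _ : C, ν (ball x₀ t) := (ENNReal.tsum_const _).symm
      _ ≤ ∑' z : C, ENNReal.ofReal Cν ^ k * ν (ball (z : Y) (ε / 2)) :=
        ENNReal.tsum_le_tsum fun z ↦ hball z z.2
      _ = ENNReal.ofReal Cν ^ k * ∑' z : C, ν (ball (z : Y) (ε / 2)) := ENNReal.tsum_mul_left
      _ ≤ ENNReal.ofReal Cν ^ k * ν (ball x₀ (t + ε)) := by
        gcongr
        exact (tsum_meas_le_meas_iUnion_of_disjoint ν (fun _ ↦ measurableSet_ball) hdisj).trans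
          (measure_mono hunion)
  refine Set.encard_ne_top_iff.1 fun htop ↦ ?_
  rw [htop, ENat.toENNReal_top, ENNReal.top_mul (hν x₀ t ht).1.ne'] at hcard
  exact ENNReal.mul_ne_top (by simp) (hν x₀ _ (by positivity)).2.ne (top_le_iff.1 hcard)

theorem IsDoublingWith.properSpace [CompleteSpace Y] [OpensMeasurableSpace Y]
    (hd : IsDoublingWith ν Cν) (hν : BallsPosFinite ν) : ProperSpace Y :=
  .of_isCompact_closedBall_of_le 1 fun x₀ t ht ↦
    (totallyBounded_of_forall_isSeparated_finite fun _ hε _ hCt hC ↦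
      hd.finite_of_isSeparated hν x₀ (by linarith) hε hCt hC).isCompact_of_isClosed isClosed_closedBall

lemma measurableSet_annulus [OpensMeasurableSpace Y] (x : Y) (a : ℝ) :
    MeasurableSet (annulus x a) :=
  measurableSet_ball.diff measurableSet_ball

lemma besovCondCap_le_besovEnergy {θ p : ℝ} {E Ω : Set Y} {u : Y → ℝ}
    (hu : condAdmissible E Ω u) : besovCondCap ν θ p E Ω ≤ besovEnergy ν θ p u :=
  iInf₂_le u hu

open Classical in
noncomputable def besovKernel (ν : Measure Y) (θ p : ℝ) (u : Y → ℝ) (x y : Y) : ℝ≥0∞ :=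
  if x = y then 0 else
    ENNReal.ofReal (|u x - u y| ^ p) /
      (ENNReal.ofReal (dist x y ^ (θ * p)) * ν (ball x (dist x y)))

lemma besovPointEnergy_eq_lintegral_besovKernel (θ p : ℝ) (u : Y → ℝ) (x : Y) :
    besovPointEnergy ν θ p u x = ∫⁻ y, besovKernel ν θ p u x y ∂ν :=
  rfl

lemma besovKernel_le {θ p a : ℝ} (hθp : 0 ≤ θ * p) (u : Y → ℝ) {x y : Y} (ha : 0 < a)
    (hay : a ≤ dist x y) :
    besovKernel ν θ p u x y ≤
      ENNReal.ofReal (|u x - u y| ^ p / a ^ (θ * p)) * (ν (ball x a))⁻¹ := by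
  have hxy : x ≠ y := dist_pos.1 (ha.trans_le hay)
  have hD : 0 < a ^ (θ * p) := by positivity
  rw [besovKernel, if_neg hxy, ENNReal.ofReal_div_of_pos hD, div_eq_mul_inv, div_eq_mul_inv,
    mul_assoc, ← ENNReal.mul_inv (.inl (ENNReal.ofReal_pos.2 hD).ne') (.inl ENNReal.ofReal_ne_top)]
  gcongr

lemma IsDoublingWith.lintegral_annulus_besovKernel_le [OpensMeasurableSpace Y]
    (hd : IsDoublingWith ν Cν) (hν : BallsPosFinite ν) {θ p : ℝ} (hθp : 0 ≤ θ * p)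
    {u : Y → ℝ} (x : Y) {a N : ℝ} (ha : 0 < a) (hN : ∀ y ∈ annulus x a, |u x - u y| ^ p ≤ N) :
    ∫⁻ y in annulus x a, besovKernel ν θ p u x y ∂ν ≤
      ENNReal.ofReal Cν * ENNReal.ofReal (N / a ^ (θ * p)) := by
  obtain ⟨hm0, hmtop⟩ := hν x a ha
  have hkernel : ∀ y ∈ annulus x a, besovKernel ν θ p u x y ≤
      ENNReal.ofReal (N / a ^ (θ * p)) * (ν (ball x a))⁻¹ := by
    intro y hy
    have hay : a ≤ dist x y := by simpa [annulus, dist_comm] using hy.2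
    refine (besovKernel_le hθp u ha hay).trans ?_
    gcongr
    exact hN y hy
  calc ∫⁻ y in annulus x a, besovKernel ν θ p u x y ∂ν
      ≤ ∫⁻ _ in annulus x a, ENNReal.ofReal (N / a ^ (θ * p)) * (ν (ball x a))⁻¹ ∂ν :=
        setLIntegral_mono' (measurableSet_annulus x a) hkernel
    _ = ENNReal.ofReal (N / a ^ (θ * p)) * (ν (ball x a))⁻¹ * ν (annulus x a) :=
        setLIntegral_const _ _
    _ ≤ ENNReal.ofReal (N / a ^ (θ * p)) * (ν (ball x a))⁻¹ *
          (ENNReal.ofReal Cν * ν (ball x a)) := by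
        gcongr
        exact (measure_mono sdiff_subset).trans (hd x a ha)
    _ = ENNReal.ofReal Cν * ENNReal.ofReal (N / a ^ (θ * p)) := by
        rw [mul_comm (ENNReal.ofReal Cν), ← mul_assoc, mul_assoc _ _ (ν (ball x a)),
          ENNReal.inv_mul_cancel hm0.ne' hmtop.ne, mul_one, mul_comm]

lemma besovPointEnergy_le_of_support_subset {θ p b : ℝ} (hθp : 0 ≤ θ * p) (hp : 0 < p) {S : Set Y}
    (hS : MeasurableSet S) {u : Y → ℝ} (hu0 : ∀ z ∉ S, u z = 0) (hu1 : ∀ z, |u z| ≤ 1)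
    {x : Y} (hx : x ∉ S) (hb : 0 < b) (hbS : ∀ y ∈ S, b ≤ dist x y) :
    besovPointEnergy ν θ p u x ≤ ENNReal.ofReal (1 / b ^ (θ * p)) * (ν (ball x b))⁻¹ * ν S := by
  have hkernel : ∀ y, besovKernel ν θ p u x y ≤
      S.indicator (fun _ ↦ ENNReal.ofReal (1 / b ^ (θ * p)) * (ν (ball x b))⁻¹) y := by
    intro y
    by_cases hy : y ∈ S
    · rw [indicator_of_mem hy]
      refine (besovKernel_le hθp u hb (hbS y hy)).trans ?_
      gcongr
      rw [hu0 x hx, zero_sub, abs_neg]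
      exact Real.rpow_le_one (abs_nonneg _) (hu1 y) hp.le
    · rw [indicator_of_notMem hy, besovKernel, hu0 x hx, hu0 y hy]
      simp [Real.zero_rpow hp.ne']
  calc besovPointEnergy ν θ p u x
      ≤ ∫⁻ y, S.indicator (fun _ ↦ ENNReal.ofReal (1 / b ^ (θ * p)) * (ν (ball x b))⁻¹) y ∂ν := by
        rw [besovPointEnergy_eq_lintegral_besovKernel]
        exact lintegral_mono hkernel
    _ = _ := lintegral_indicator_const hS _

lemma IsDoublingWith.besovPointEnergy_le [OpensMeasurableSpace Y] (hd : IsDoublingWith ν Cν)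
    (hν : BallsPosFinite ν) {θ p ρ : ℝ} (hθ0 : 0 < θ) (hθ1 : θ < 1) (hp : 0 < p) (hρ : 0 < ρ)
    {u : Y → ℝ} (hu1 : ∀ a b, |u a - u b| ≤ 1) (hLip : ∀ a b, |u a - u b| ≤ 4 / ρ * dist a b)
    (x : Y) :
    besovPointEnergy ν θ p u x ≤
      ENNReal.ofReal Cν * ENNReal.ofReal (besovPointConst θ p / ρ ^ (θ * p)) := by
  have hθp : 0 < θ * p := by positivity
  have hq₁ : (2 : ℝ) ^ (θ * p - p) < 1 :=
    Real.rpow_lt_one_of_one_lt_of_neg one_lt_two (by nlinarith)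
  have hq₂ : (2 : ℝ) ^ (-(θ * p)) < 1 := Real.rpow_lt_one_of_one_lt_of_neg one_lt_two (by linarith)
  set f : ℤ → ℝ≥0∞ := fun n ↦ ∫⁻ y in annulus x (ρ * 2 ^ n), besovKernel ν θ p u x y ∂ν
  have hsupp : Function.support (besovKernel ν θ p u x) ⊆ ⋃ n : ℤ, annulus x (ρ * 2 ^ n) := by
    intro y hy
    have hxy : x ≠ y := by
      rintro rfl
      exact hy (by simp [besovKernel])
    exact mem_iUnion.2 (exists_mem_annulus_zpow hxy hρ)
  have hfar : ∀ j : ℕ, f j ≤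
      ENNReal.ofReal Cν * ENNReal.ofReal (1 / ρ ^ (θ * p) * (2 ^ (-(θ * p))) ^ j) := by
    intro j
    rw [← one_div_rpow_mul_two_pow hρ]
    simp only [f, zpow_natCast]
    exact hd.lintegral_annulus_besovKernel_le hν hθp.le x (by positivity) fun y _ ↦
      Real.rpow_le_one (abs_nonneg _) (hu1 x y) hp.le
  have hnear : ∀ j : ℕ, f (-(j + 1)) ≤ ENNReal.ofReal Cν *
      ENNReal.ofReal (4 ^ p * 2 ^ (θ * p) / ρ ^ (θ * p) * (2 ^ (θ * p - p)) ^ j) := by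
    intro j
    rw [← rpow_div_rpow_div_two_pow hρ]
    have hrad : ρ * (2 : ℝ) ^ (-((j : ℤ) + 1)) = ρ / 2 ^ (j + 1) := by
      rw [zpow_neg, ← div_eq_mul_inv]; norm_cast
    simp only [f, hrad]
    refine hd.lintegral_annulus_besovKernel_le hν hθp.le x (by positivity) fun y hy ↦ ?_
    refine Real.rpow_le_rpow (abs_nonneg _) ((hLip x y).trans ?_) hp.le
    have hxy : dist x y < 2 * (ρ / 2 ^ (j + 1)) := by simpa [dist_comm] using hy.1
    calc 4 / ρ * dist x y ≤ 4 / ρ * (2 * (ρ / 2 ^ (j + 1))) := by gcongr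
      _ = 4 / 2 ^ j := by field_simp; ring
  calc besovPointEnergy ν θ p u x
      = ∫⁻ y in ⋃ n : ℤ, annulus x (ρ * 2 ^ n), besovKernel ν θ p u x y ∂ν := by
        rw [besovPointEnergy_eq_lintegral_besovKernel, setLIntegral_eq_of_support_subset hsupp]
    _ ≤ ∑' n : ℤ, f n := lintegral_iUnion_le _ _
    _ = ∑' j : ℕ, f j + ∑' j : ℕ, f (-(j + 1)) :=
        tsum_of_nat_of_neg_add_one ENNReal.summable ENNReal.summable
    _ ≤ ∑' j : ℕ, ENNReal.ofReal Cν *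
          ENNReal.ofReal (1 / ρ ^ (θ * p) * (2 ^ (-(θ * p))) ^ j) +
        ∑' j : ℕ, ENNReal.ofReal Cν *
          ENNReal.ofReal (4 ^ p * 2 ^ (θ * p) / ρ ^ (θ * p) * (2 ^ (θ * p - p)) ^ j) := by
        gcongr with j j
        exacts [hfar j, hnear j]
    _ = ENNReal.ofReal Cν * ENNReal.ofReal (besovPointConst θ p / ρ ^ (θ * p)) := by
        rw [ENNReal.tsum_mul_left, ENNReal.tsum_mul_left,
          tsum_ofReal_mul_geometric (by positivity) (by positivity) hq₂,
          tsum_ofReal_mul_geometric (by positivity) (by positivity) hq₁, ← mul_add,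
          ← ENNReal.ofReal_add (div_nonneg (by positivity) (by linarith))
            (div_nonneg (by positivity) (by linarith)), besovPointConst]
        congr 2
        ring

lemma IsDoublingWith.lintegral_annulus_besovPointEnergy_le [OpensMeasurableSpace Y]
    (hd : IsDoublingWith ν Cν) (hν : BallsPosFinite ν) {θ p : ℝ} (hθp : 0 ≤ θ * p) (hp : 0 < p)
    {x₀ : Y} {ρ b : ℝ} (hρ : 0 < ρ) (hb : ρ ≤ b) {u : Y → ℝ}
    (hu0 : ∀ z, ρ ≤ dist x₀ z → u z = 0) (hu1 : ∀ z, |u z| ≤ 1) :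
    ∫⁻ x in annulus x₀ (2 * b), besovPointEnergy ν θ p u x ∂ν ≤
      ENNReal.ofReal Cν ^ 3 * ENNReal.ofReal (1 / b ^ (θ * p)) * ν (ball x₀ ρ) := by
  have hb0 : 0 < b := hρ.trans_le hb
  obtain ⟨hM0, hMtop⟩ := hν x₀ (2 * (2 * b)) (by positivity)
  have hpoint : ∀ x ∈ annulus x₀ (2 * b), besovPointEnergy ν θ p u x ≤
      ENNReal.ofReal (1 / b ^ (θ * p)) * (ENNReal.ofReal Cν ^ 3 * (ν (ball x₀ (2 * (2 * b))))⁻¹) *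
        ν (ball x₀ ρ) := by
    intro x hx
    have hx₀x : 2 * b ≤ dist x₀ x := by simpa [annulus, dist_comm] using hx.2
    obtain ⟨hm0, hmtop⟩ := hν x b hb0
    refine (besovPointEnergy_le_of_support_subset (S := ball x₀ ρ) hθp hp measurableSet_ball
      (fun z hz ↦ hu0 z (by rwa [mem_ball, not_lt, dist_comm] at hz)) hu1
      (by rw [mem_ball, dist_comm]; linarith) hb0 fun y hy ↦ ?_).trans ?_
    · rw [mem_ball, dist_comm] at hy
      linarith [dist_triangle x₀ y x, dist_comm x y]
    · -- `B(x₀, 4b) ⊆ B(x, 8b)`, so `ν(B(x, b))⁻¹ ≤ Cν³ ν(B(x₀, 4b))⁻¹` uniformly on the annulus.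
      gcongr
      refine ENNReal.inv_le_mul_inv_of_le_mul hM0.ne' hMtop.ne hm0.ne' hmtop.ne
        ((measure_mono fun y hy ↦ ?_).trans (hd.measure_ball_two_pow_mul_le 3 x hb0))
      rw [mem_ball] at hy ⊢
      linarith [dist_triangle y x₀ x, mem_ball.1 hx.1, dist_comm x x₀]
  calc ∫⁻ x in annulus x₀ (2 * b), besovPointEnergy ν θ p u x ∂ν
      ≤ ∫⁻ _ in annulus x₀ (2 * b), ENNReal.ofReal (1 / b ^ (θ * p)) *
          (ENNReal.ofReal Cν ^ 3 * (ν (ball x₀ (2 * (2 * b))))⁻¹) * ν (ball x₀ ρ) ∂ν :=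
        setLIntegral_mono' (measurableSet_annulus _ _) hpoint
    _ = ENNReal.ofReal (1 / b ^ (θ * p)) * (ENNReal.ofReal Cν ^ 3 *
          (ν (ball x₀ (2 * (2 * b))))⁻¹) * ν (ball x₀ ρ) * ν (annulus x₀ (2 * b)) :=
        setLIntegral_const _ _
    _ ≤ ENNReal.ofReal (1 / b ^ (θ * p)) * (ENNReal.ofReal Cν ^ 3 *
          (ν (ball x₀ (2 * (2 * b))))⁻¹) * ν (ball x₀ ρ) * ν (ball x₀ (2 * (2 * b))) := by
        gcongr
        exact sdiff_subset
    _ = ENNReal.ofReal Cν ^ 3 * ENNReal.ofReal (1 / b ^ (θ * p)) * ν (ball x₀ ρ) *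
          ((ν (ball x₀ (2 * (2 * b))))⁻¹ * ν (ball x₀ (2 * (2 * b)))) := by ring
    _ = ENNReal.ofReal Cν ^ 3 * ENNReal.ofReal (1 / b ^ (θ * p)) * ν (ball x₀ ρ) := by
        rw [ENNReal.inv_mul_cancel hM0.ne' hMtop.ne, mul_one]

lemma IsDoublingWith.besovEnergy_le [OpensMeasurableSpace Y] (hd : IsDoublingWith ν Cν)
    (hν : BallsPosFinite ν) (hC : 0 ≤ Cν) {θ p ρ : ℝ} (hθ0 : 0 < θ) (hθ1 : θ < 1) (hp : 0 < p)
    {x₀ : Y} (hρ : 0 < ρ) {u : Y → ℝ} (hu01 : ∀ z, 0 ≤ u z ∧ u z ≤ 1)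
    (hLip : ∀ a b, |u a - u b| ≤ 4 / ρ * dist a b) (hu0 : ∀ z, ρ ≤ dist x₀ z → u z = 0) :
    besovEnergy ν θ p u ≤ ENNReal.ofReal (besovEnergyConst θ p Cν) *
      (ν (ball x₀ ρ) / ENNReal.ofReal (ρ ^ (θ * p))) := by
  have hθp : 0 < θ * p := by positivity
  have hq : (2 : ℝ) ^ (-(θ * p)) < 1 := Real.rpow_lt_one_of_one_lt_of_neg one_lt_two (by linarith)
  have hu1 : ∀ a b, |u a - u b| ≤ 1 := fun a b ↦
    abs_sub_le_iff.2 ⟨by linarith [hu01 a, hu01 b], by linarith [hu01 a, hu01 b]⟩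
  set c := ENNReal.ofReal Cν
  set P := besovPointEnergy ν θ p u
  have hnear : ∫⁻ x in ball x₀ (2 * ρ), P x ∂ν ≤
      c * ENNReal.ofReal (besovPointConst θ p / ρ ^ (θ * p)) * (c * ν (ball x₀ ρ)) :=
    calc ∫⁻ x in ball x₀ (2 * ρ), P x ∂ν
        ≤ ∫⁻ _ in ball x₀ (2 * ρ), c * ENNReal.ofReal (besovPointConst θ p / ρ ^ (θ * p)) ∂ν :=
          setLIntegral_mono' measurableSet_ball fun x _ ↦
            hd.besovPointEnergy_le hν hθ0 hθ1 hp hρ hu1 hLip x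
      _ ≤ _ := by rw [setLIntegral_const]; gcongr; exact hd x₀ ρ hρ
  have hfar : ∫⁻ x in (ball x₀ (2 * ρ))ᶜ, P x ∂ν ≤
      c ^ 3 * ENNReal.ofReal (1 / ρ ^ (θ * p) / (1 - 2 ^ (-(θ * p)))) * ν (ball x₀ ρ) :=
    calc ∫⁻ x in (ball x₀ (2 * ρ))ᶜ, P x ∂ν
        ≤ ∫⁻ x in ⋃ j : ℕ, annulus x₀ (2 * (ρ * 2 ^ j)), P x ∂ν := by
          refine lintegral_mono_set ((compl_ball_subset_iUnion_annulus x₀ (by positivity)).trans ?_)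
          simp only [mul_assoc, subset_rfl]
      _ ≤ ∑' j : ℕ, ∫⁻ x in annulus x₀ (2 * (ρ * 2 ^ j)), P x ∂ν := lintegral_iUnion_le _ _
      _ ≤ ∑' j : ℕ, c ^ 3 * ENNReal.ofReal (1 / ρ ^ (θ * p) * (2 ^ (-(θ * p))) ^ j) *
            ν (ball x₀ ρ) := by
          gcongr with j
          rw [← one_div_rpow_mul_two_pow hρ]
          exact hd.lintegral_annulus_besovPointEnergy_le hν hθp.le hp hρ
            (le_mul_of_one_le_right hρ.le (one_le_pow₀ one_le_two)) hu0 fun z ↦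
              abs_le.2 ⟨by linarith [hu01 z], (hu01 z).2⟩
      _ = _ := by
          rw [ENNReal.tsum_mul_right, ENNReal.tsum_mul_left,
            tsum_ofReal_mul_geometric (by positivity) (by positivity) hq]
  have hK := besovPointConst_pos hθ0 hθ1 hp
  have hE : ENNReal.ofReal (besovEnergyConst θ p Cν) =
      c ^ 2 * ENNReal.ofReal (besovPointConst θ p) +
        c ^ 3 * ENNReal.ofReal (1 / (1 - 2 ^ (-(θ * p)))) := by
    have := sub_pos.2 hq
    rw [besovEnergyConst, ENNReal.ofReal_add (by positivity) (by positivity),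
      ENNReal.ofReal_mul (by positivity), ← mul_one_div (Cν ^ 3),
      ENNReal.ofReal_mul (by positivity), ENNReal.ofReal_pow hC, ENNReal.ofReal_pow hC]
  have hD : 0 < ρ ^ (θ * p) := by positivity
  rw [besovEnergy, ← lintegral_add_compl P measurableSet_ball]
  refine (add_le_add hnear hfar).trans (le_of_eq ?_)
  rw [hE, div_right_comm, ENNReal.ofReal_div_of_pos hD, ENNReal.ofReal_div_of_pos hD]
  simp only [div_eq_mul_inv]
  ring

lemma IsDoublingWith.besovCondCap_ball_le [ProperSpace Y] [OpensMeasurableSpace Y]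
    (hd : IsDoublingWith ν Cν) (hν : BallsPosFinite ν) (hC : 0 ≤ Cν) {θ p : ℝ} (hθ0 : 0 < θ)
    (hθ1 : θ < 1) (hp : 0 < p) (x₀ : Y) {r R ρ : ℝ} (hρ : 0 < ρ) (hrρ : 2 * r ≤ ρ)
    (hρR : ρ ≤ R) :
    besovCondCap ν θ p (ball x₀ r) (ball x₀ R) ≤
      ENNReal.ofReal (besovEnergyConst θ p Cν) * (ν (ball x₀ ρ) / ENNReal.ofReal (ρ ^ (θ * p))) :=
  (besovCondCap_le_besovEnergy ((condAdmissible_ballCutoff x₀ hρ).mono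
    (ball_subset_ball (by linarith)) (ball_subset_ball hρR))).trans
    (hd.besovEnergy_le hν hC hθ0 hθ1 hp hρ
      (fun z ↦ ⟨ballCutoff_nonneg x₀ ρ z, ballCutoff_le_one x₀ ρ z⟩)
      (abs_ballCutoff_sub_le x₀ hρ.le) fun _ hz ↦ ballCutoff_eq_zero x₀ hρ (by linarith))

end Measure

universe u

theorem stmt8 (θ p Cν : ℝ) (hθ0 : 0 < θ) (hθ1 : θ < 1) (hp : 1 ≤ p) (hC : 1 < Cν) :
    ∃ C : ℝ, 0 < C ∧
      ∀ (Y : Type u) [MetricSpace Y] [MeasurableSpace Y] [BorelSpace Y] [CompleteSpace Y]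
        (ν : Measure Y), IsDoublingWith ν Cν → BallsPosFinite ν →
        ∀ (x₀ : Y) (r R : ℝ), 0 < r → 2 * r ≤ R →
          besovCondCap ν θ p (ball x₀ r) (ball x₀ R) ≤
            ENNReal.ofReal C *
              min (ν (ball x₀ r) / ENNReal.ofReal (r ^ (θ * p)))
                (ν (ball x₀ R) / ENNReal.ofReal (R ^ (θ * p))) := by
  have hp0 : 0 < p := by linarith
  have hE := besovEnergyConst_pos hθ0 hθ1 hp0 (by linarith : 0 < Cν)
  refine ⟨besovEnergyConst θ p Cν * Cν, mul_pos hE (by linarith), ?_⟩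
  intro Y _ _ _ _ ν hd hν x₀ r R hr hrR
  have := hd.properSpace hν
  have hcap {ρ : ℝ} (hρ : 0 < ρ) (hrρ : 2 * r ≤ ρ) (hρR : ρ ≤ R) :=
    hd.besovCondCap_ball_le hν (by linarith) hθ0 hθ1 hp0 x₀ hρ hrρ hρR
  rw [ENNReal.ofReal_mul hE.le, mul_assoc]
  rcases le_total (ν (ball x₀ r) / ENNReal.ofReal (r ^ (θ * p)))
    (ν (ball x₀ R) / ENNReal.ofReal (R ^ (θ * p))) with h | h
  · rw [min_eq_left h, ← mul_div_assoc]
    refine (hcap (by positivity) le_rfl hrR).trans ?_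
    gcongr
    · exact hd x₀ r hr
    · linarith
  · rw [min_eq_right h]
    refine (hcap (by linarith) hrR le_rfl).trans ?_
    gcongr
    exact le_mul_of_one_le_left' (ENNReal.one_le_ofReal.2 hC.le)
end

section
/- Let Y be a metric space with doubling measure ν, x_0 ∈ Y, δ > 0. Define Y_0 = {x_0}, Y_{n+1} = ⋃_{x∈Y_n} B(x, 2^{-n}δ), and Y' = closure(⋃_n Y_n), with ν' = ν restricted to Y'. Then: (1) B(x_0,δ) ⊂ Y' ⊂ closure(B(x_0,2δ)); (2) ν' is doubling on Y' with constant at most C_ν^6; (3) ν'(B^{Y'}(x,r)) ≤ ν(B^Y(x,r)) ≤ C_ν^5 ν'(B^{Y'}(x,r)) for all x ∈ Y' and 0 < r < 2 diam Y'; (4) if Y is uniformly perfect at x_0 with constant κ, then Y' is uniformly perfect at x_0 with constant max{κ,2}. -/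
open MeasureTheory Metric Set ENNReal

/-- The recursively defined sets `Y_0 = {x₀}`, `Y_{n+1} = ⋃_{x ∈ Y_n} B(x, 2^{-n} δ)`. -/
def iterSet {Y : Type*} [MetricSpace Y] (x₀ : Y) (δ : ℝ) : ℕ → Set Y
  | 0 => {x₀}
  | n + 1 => ⋃ x ∈ iterSet x₀ δ n, ball x (δ / 2 ^ n)

/-!
A point of `Y_{n+1}` lies within `δ 2^{-n}` of a point of `Y_n`, so walking from a point of
`Y_n` back to `x₀` costs less than `2δ`. Stopping the walk at the last generation whose step
`δ 2^{-k}` is still at least `s` gives a ball of radius `s` inside `⋃ Y_n` at distance at most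
`4s`. Hence every ball of radius `r ≤ 8δ` centred in `Y'` contains a ball of radius `r/8` inside
`Y'` whose `2^5`-fold enlargement covers it: this gives the comparison with the constant `C_ν^5`,
and one more doubling step the doubling of `ν'`; larger balls contain all of `Y' ⊆ B̄(x₀, 2δ)`.
For uniform perfectness at a scale `κ r > δ`, the walk back from a far point of `Y'` crosses the
sphere of radius `r` either inside `B(x₀, δ)` or with a step of length at most `δ/2`.
-/

section IterSet

variable {Y : Type*} [MetricSpace Y] {x₀ : Y} {δ : ℝ}

theorem mem_iterSet_succ {n : ℕ} {y : Y} :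
    y ∈ iterSet x₀ δ (n + 1) ↔ ∃ x ∈ iterSet x₀ δ n, dist y x < δ / 2 ^ n := by
  simp [iterSet]

theorem iterSet_one : iterSet x₀ δ 1 = ball x₀ δ := by
  simp [iterSet]

theorem ball_subset_iUnion_iterSet {n : ℕ} {x : Y} (hx : x ∈ iterSet x₀ δ n) {s : ℝ}
    (hs : s ≤ δ / 2 ^ n) : ball x s ⊆ ⋃ m, iterSet x₀ δ m := fun _ hy =>
  mem_iUnion.mpr ⟨n + 1, mem_iterSet_succ.mpr ⟨x, hx, (mem_ball.mp hy).trans_le hs⟩⟩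

theorem dist_le_of_mem_iterSet : ∀ {n : ℕ} {y : Y}, y ∈ iterSet x₀ δ n →
    dist y x₀ ≤ 2 * δ - 2 * (δ / 2 ^ n)
  | 0, y, hy => by simp_all [iterSet]
  | n + 1, y, hy => by
    obtain ⟨x, hx, hyx⟩ := mem_iterSet_succ.mp hy
    have hxx₀ := dist_le_of_mem_iterSet hx
    have := dist_triangle y x x₀
    rw [pow_succ, ← div_div]
    linarith

theorem iUnion_iterSet_subset_ball (hδ : 0 < δ) :
    ⋃ n, iterSet x₀ δ n ⊆ ball x₀ (2 * δ) := by
  intro y hy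
  obtain ⟨n, hn⟩ := mem_iUnion.mp hy
  have : 0 < δ / 2 ^ n := by positivity
  exact mem_ball.mpr (by linarith [dist_le_of_mem_iterSet hn])

theorem diam_closure_iUnion_iterSet_le (hδ : 0 < δ) :
    diam (closure (⋃ n, iterSet x₀ δ n)) ≤ 4 * δ := by
  rw [diam_closure]
  calc diam (⋃ n, iterSet x₀ δ n) ≤ diam (ball x₀ (2 * δ)) :=
        diam_mono (iUnion_iterSet_subset_ball hδ) isBounded_ball
    _ ≤ 4 * δ := by linarith [diam_ball (x := x₀) (by linarith : 0 ≤ 2 * δ)]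

theorem closure_iUnion_iterSet_subset_ball (hδ : 0 < δ) {x : Y}
    (hx : x ∈ closure (⋃ n, iterSet x₀ δ n)) {r : ℝ} (hr : 4 * δ < r) :
    closure (⋃ n, iterSet x₀ δ n) ⊆ ball x r := by
  have hbdd : Bornology.IsBounded (closure (⋃ n, iterSet x₀ δ n)) :=
    (isBounded_ball.subset (iUnion_iterSet_subset_ball hδ)).closure
  exact fun y hy => mem_ball.mpr ((dist_le_diam_of_mem hbdd hy hx).trans_lt
    ((diam_closure_iUnion_iterSet_le hδ).trans_lt hr))

/- The extra `2 δ 2^{-n}` in the distance bound is the budget that pays for the next step of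
the walk back. -/
theorem exists_dist_add_le_ball_subset_iUnion_iterSet {s : ℝ} (hs : 0 ≤ s) (hsδ : s ≤ δ) :
    ∀ {n : ℕ} {y : Y}, y ∈ iterSet x₀ δ n → δ / 2 ^ n ≤ s →
      ∃ z, dist y z + 2 * (δ / 2 ^ n) ≤ 4 * s ∧ ball z s ⊆ ⋃ m, iterSet x₀ δ m
  | 0, y, hy, hns => by
    refine ⟨y, by simp_all; linarith, ball_subset_iUnion_iterSet hy (by simpa using hsδ)⟩
  | n + 1, y, hy, hns => by
    obtain ⟨x, hx, hyx⟩ := mem_iterSet_succ.mp hy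
    rw [pow_succ, ← div_div] at hns ⊢
    rcases le_or_gt (δ / 2 ^ n) s with hxs | hsx
    · obtain ⟨z, hxz, hz⟩ := exists_dist_add_le_ball_subset_iUnion_iterSet hs hsδ hx hxs
      exact ⟨z, by linarith [dist_triangle y x z], hz⟩
    · exact ⟨x, by linarith, ball_subset_iUnion_iterSet hx hsx.le⟩

theorem exists_dist_le_ball_subset_iUnion_iterSet {n : ℕ} {y : Y} (hy : y ∈ iterSet x₀ δ n)
    {s : ℝ} (hs : 0 ≤ s) (hsδ : s ≤ δ) :
    ∃ z, dist y z ≤ 4 * s ∧ ball z s ⊆ ⋃ m, iterSet x₀ δ m := by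
  rcases le_or_gt (δ / 2 ^ n) s with hns | hsn
  · have : 0 ≤ δ / 2 ^ n := by have := hs.trans hsδ; positivity
    obtain ⟨z, hyz, hz⟩ := exists_dist_add_le_ball_subset_iUnion_iterSet hs hsδ hy hns
    exact ⟨z, by linarith, hz⟩
  · exact ⟨y, by simpa using hs, ball_subset_iUnion_iterSet hy hsn.le⟩

theorem exists_mem_iUnion_iterSet_le_dist_lt {r : ℝ} (hr : 0 < r) (hδ : 0 ≤ δ) :
    ∀ {n : ℕ} {y : Y}, y ∈ iterSet x₀ δ n → r ≤ dist y x₀ →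
      ∃ w ∈ ⋃ m, iterSet x₀ δ m, r ≤ dist w x₀ ∧ dist w x₀ < max δ (r + δ / 2)
  | 0, y, hy, hry => by simp_all [iterSet]; linarith
  | n + 1, y, hy, hry => by
    obtain ⟨x, hx, hyx⟩ := mem_iterSet_succ.mp hy
    rcases le_or_gt r (dist x x₀) with hrx | hxr
    · exact exists_mem_iUnion_iterSet_le_dist_lt hr hδ hx hrx
    refine ⟨y, mem_iUnion.mpr ⟨n + 1, hy⟩, hry, ?_⟩
    rcases n with _ | m
    · simp_all [iterSet]
    · have : δ / 2 ^ (m + 1) ≤ δ / 2 := div_le_div_of_nonneg_left hδ two_pos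
        (le_self_pow₀ one_le_two m.succ_ne_zero)
      exact lt_max_of_lt_right (by linarith [dist_triangle y x x₀])

theorem annulus_inter_closure_iUnion_iterSet_nonempty (hδ : 0 < δ) {κ r : ℝ}
    (hup : UnifPerfectAt x₀ κ) (hr : 0 < r)
    (hfar : ¬ closure (⋃ n, iterSet x₀ δ n) ⊆ ball x₀ (max κ 2 * r)) :
    ((ball x₀ (max κ 2 * r) \ ball x₀ r) ∩ closure (⋃ n, iterSet x₀ δ n)).Nonempty := by
  obtain ⟨y, hyY, hyfar⟩ := not_subset.mp hfar
  rw [mem_ball, not_lt] at hyfar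
  have hκr : κ * r ≤ max κ 2 * r := by gcongr; exact le_max_left _ _
  have h2r : 2 * r ≤ max κ 2 * r := by gcongr; exact le_max_right _ _
  rcases le_or_gt (κ * r) δ with hκδ | hδκ
  · have hne : ball x₀ (κ * r) ≠ univ := fun h => by
      linarith [mem_ball.mp (h ▸ mem_univ y : y ∈ ball x₀ (κ * r))]
    obtain ⟨w, hwκ, hwr⟩ := hup r hr hne
    have hwY : w ∈ closure (⋃ n, iterSet x₀ δ n) := by
      have hw1 : w ∈ iterSet x₀ δ 1 := by rw [iterSet_one]; exact ball_subset_ball hκδ hwκ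
      exact subset_closure (mem_iUnion_of_mem 1 hw1)
    exact ⟨w, ⟨ball_subset_ball hκr hwκ, hwr⟩, hwY⟩
  · obtain ⟨y', hy'U, hyy'⟩ := Metric.mem_closure_iff.mp hyY r hr
    obtain ⟨n, hn⟩ := mem_iUnion.mp hy'U
    obtain ⟨w, hwU, hrw, hwlt⟩ := exists_mem_iUnion_iterSet_le_dist_lt hr hδ.le hn
      (by linarith [dist_triangle y y' x₀])
    have : max δ (r + δ / 2) ≤ max κ 2 * r := max_le (by linarith) (by linarith)
    refine ⟨w, ⟨mem_ball.mpr (by linarith), ?_⟩, subset_closure hwU⟩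
    simpa only [mem_ball, not_lt] using hrw

end IterSet

theorem IsDoublingWith.measure_ball_two_pow_mul_le_s16 {Y : Type*} [MetricSpace Y]
    [MeasurableSpace Y] {ν : Measure Y} {C : ℝ} (h : IsDoublingWith ν C) (z : Y) {t : ℝ}
    (ht : 0 < t) : ∀ m : ℕ, ν (ball z (2 ^ m * t)) ≤ ENNReal.ofReal C ^ m * ν (ball z t)
  | 0 => by simp
  | m + 1 => calc
      ν (ball z (2 ^ (m + 1) * t)) = ν (ball z (2 * (2 ^ m * t))) := by rw [pow_succ']; ring_nf
      _ ≤ ENNReal.ofReal C * ν (ball z (2 ^ m * t)) := h z _ (by positivity)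
      _ ≤ ENNReal.ofReal C * (ENNReal.ofReal C ^ m * ν (ball z t)) := by
          gcongr; exact h.measure_ball_two_pow_mul_le_s16 z ht m
      _ = ENNReal.ofReal C ^ (m + 1) * ν (ball z t) := by rw [pow_succ']; ring

theorem measure_ball_le_restrict_closure_iUnion_iterSet {Y : Type*} [MetricSpace Y]
    [MeasurableSpace Y] {ν : Measure Y} {C : ℝ} (hdoub : IsDoublingWith ν C) (hC : 0 ≤ C)
    {x₀ x : Y} {δ r : ℝ} (hx : x ∈ closure (⋃ n, iterSet x₀ δ n)) (hr : 0 < r)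
    (hrδ : r ≤ 8 * δ) :
    ν (ball x r) ≤
      ENNReal.ofReal (C ^ 5) * ν.restrict (closure (⋃ n, iterSet x₀ δ n)) (ball x r) := by
  obtain ⟨y, hyU, hxy⟩ := Metric.mem_closure_iff.mp hx (r / 8) (by positivity)
  obtain ⟨n, hn⟩ := mem_iUnion.mp hyU
  obtain ⟨z, hyz, hz⟩ :=
    exists_dist_le_ball_subset_iUnion_iterSet hn (s := r / 8) (by positivity) (by linarith)
  have hxz : dist x z < 5 * (r / 8) := by linarith [dist_triangle x y z]
  have h_inner : ball z (r / 8) ⊆ ball x r ∩ closure (⋃ n, iterSet x₀ δ n) := fun w hw =>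
    ⟨mem_ball.mpr (by linarith [mem_ball.mp hw, dist_triangle w z x, dist_comm x z]),
      subset_closure (hz hw)⟩
  have h_outer : ball x r ⊆ ball z (2 ^ 5 * (r / 8)) := fun w hw =>
    mem_ball.mpr (by linarith [mem_ball.mp hw, dist_triangle w x z])
  calc ν (ball x r) ≤ ν (ball z (2 ^ 5 * (r / 8))) := measure_mono h_outer
    _ ≤ ENNReal.ofReal C ^ 5 * ν (ball z (r / 8)) :=
        hdoub.measure_ball_two_pow_mul_le_s16 z (by positivity) 5
    _ ≤ ENNReal.ofReal (C ^ 5) * ν.restrict (closure (⋃ n, iterSet x₀ δ n)) (ball x r) := by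
        rw [ENNReal.ofReal_pow hC]
        exact mul_le_mul_right ((measure_mono h_inner).trans (Measure.le_restrict_apply _ _)) _

theorem stmt16_general {Y : Type*} [MetricSpace Y] [MeasurableSpace Y]
    (ν : Measure Y) (Cν : ℝ) (hC : 1 < Cν)
    (hdoub : IsDoublingWith ν Cν)
    (x₀ : Y) (δ : ℝ) (hδ : 0 < δ) :
    -- (1) B(x₀,δ) ⊆ Y' ⊆ closure B(x₀,2δ)
    (ball x₀ δ ⊆ closure (⋃ n, iterSet x₀ δ n) ∧
      closure (⋃ n, iterSet x₀ δ n) ⊆ closure (ball x₀ (2 * δ))) ∧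
    -- (2) ν' = ν restricted to Y' is doubling with constant at most Cν^6
    (∀ x ∈ closure (⋃ n, iterSet x₀ δ n), ∀ r : ℝ, 0 < r →
        ν.restrict (closure (⋃ n, iterSet x₀ δ n)) (ball x (2 * r)) ≤
          ENNReal.ofReal (Cν ^ 6) *
            ν.restrict (closure (⋃ n, iterSet x₀ δ n)) (ball x r)) ∧
    -- (3) ν'(B^{Y'}(x,r)) ≤ ν(B^Y(x,r)) ≤ Cν^5 ν'(B^{Y'}(x,r))
    (∀ x ∈ closure (⋃ n, iterSet x₀ δ n), ∀ r : ℝ, 0 < r →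
        r < 2 * Metric.diam (closure (⋃ n, iterSet x₀ δ n)) →
        ν.restrict (closure (⋃ n, iterSet x₀ δ n)) (ball x r) ≤ ν (ball x r) ∧
        ν (ball x r) ≤ ENNReal.ofReal (Cν ^ 5) *
          ν.restrict (closure (⋃ n, iterSet x₀ δ n)) (ball x r)) ∧
    -- (4) uniform perfectness of Y' at x₀ with constant max κ 2
    (∀ κ : ℝ, 1 < κ → UnifPerfectAt x₀ κ →
      ∀ r : ℝ, 0 < r → ¬ closure (⋃ n, iterSet x₀ δ n) ⊆ ball x₀ (max κ 2 * r) →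
        ((ball x₀ (max κ 2 * r) \ ball x₀ r) ∩
          closure (⋃ n, iterSet x₀ δ n)).Nonempty) := by
  set Y' := closure (⋃ n, iterSet x₀ δ n)
  have hC₀ : 0 ≤ Cν := by linarith
  have hball : ball x₀ δ ⊆ Y' := by
    rw [← iterSet_one]
    exact (subset_iUnion _ 1).trans subset_closure
  refine ⟨⟨hball, closure_mono (iUnion_iterSet_subset_ball hδ)⟩, ?_, ?_,
    fun κ _ hup r hr => annulus_inter_closure_iUnion_iterSet_nonempty hδ hup hr⟩
  · intro x hx r hr
    rcases le_or_gt r (8 * δ) with hrδ | hδr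
    · calc ν.restrict Y' (ball x (2 * r)) ≤ ν (ball x (2 * r)) := Measure.restrict_apply_le _ _
        _ ≤ ENNReal.ofReal Cν * ν (ball x r) := hdoub x r hr
        _ ≤ ENNReal.ofReal Cν * (ENNReal.ofReal (Cν ^ 5) * ν.restrict Y' (ball x r)) :=
            mul_le_mul_right
              (measure_ball_le_restrict_closure_iUnion_iterSet hdoub hC₀ hx hr hrδ) _
        _ = ENNReal.ofReal (Cν ^ 6) * ν.restrict Y' (ball x r) := by
            rw [← mul_assoc, ← ENNReal.ofReal_mul hC₀, ← pow_succ']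
    · have hsub := closure_iUnion_iterSet_subset_ball hδ hx (by linarith : 4 * δ < r)
      rw [Measure.restrict_apply_superset hsub,
        Measure.restrict_apply_superset (hsub.trans (ball_subset_ball (by linarith)))]
      exact le_mul_of_one_le_left zero_le (ENNReal.one_le_ofReal.mpr (one_le_pow₀ hC.le))
  · intro x hx r hr hrd
    have hrδ : r ≤ 8 * δ := by linarith [diam_closure_iUnion_iterSet_le (x₀ := x₀) hδ]
    exact ⟨Measure.restrict_apply_le _ _,
      measure_ball_le_restrict_closure_iUnion_iterSet hdoub hC₀ hx hr hrδ⟩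

theorem stmt16 {Y : Type*} [MetricSpace Y] [MeasurableSpace Y] [BorelSpace Y]
    (ν : Measure Y) (Cν : ℝ) (hC : 1 < Cν)
    (hdoub : IsDoublingWith ν Cν) (hballs : BallsPosFinite ν)
    (x₀ : Y) (δ : ℝ) (hδ : 0 < δ) :
    -- (1) B(x₀,δ) ⊆ Y' ⊆ closure B(x₀,2δ)
    (ball x₀ δ ⊆ closure (⋃ n, iterSet x₀ δ n) ∧
      closure (⋃ n, iterSet x₀ δ n) ⊆ closure (ball x₀ (2 * δ))) ∧
    -- (2) ν' = ν restricted to Y' is doubling with constant at most Cν^6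
    (∀ x ∈ closure (⋃ n, iterSet x₀ δ n), ∀ r : ℝ, 0 < r →
        ν.restrict (closure (⋃ n, iterSet x₀ δ n)) (ball x (2 * r)) ≤
          ENNReal.ofReal (Cν ^ 6) *
            ν.restrict (closure (⋃ n, iterSet x₀ δ n)) (ball x r)) ∧
    -- (3) ν'(B^{Y'}(x,r)) ≤ ν(B^Y(x,r)) ≤ Cν^5 ν'(B^{Y'}(x,r))
    (∀ x ∈ closure (⋃ n, iterSet x₀ δ n), ∀ r : ℝ, 0 < r →
        r < 2 * Metric.diam (closure (⋃ n, iterSet x₀ δ n)) →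
        ν.restrict (closure (⋃ n, iterSet x₀ δ n)) (ball x r) ≤ ν (ball x r) ∧
        ν (ball x r) ≤ ENNReal.ofReal (Cν ^ 5) *
          ν.restrict (closure (⋃ n, iterSet x₀ δ n)) (ball x r)) ∧
    -- (4) uniform perfectness of Y' at x₀ with constant max κ 2
    (∀ κ : ℝ, 1 < κ → UnifPerfectAt x₀ κ →
      ∀ r : ℝ, 0 < r → ¬ closure (⋃ n, iterSet x₀ δ n) ⊆ ball x₀ (max κ 2 * r) →
        ((ball x₀ (max κ 2 * r) \ ball x₀ r) ∩
          closure (⋃ n, iterSet x₀ δ n)).Nonempty) :=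
  stmt16_general ν Cν hC hdoub x₀ δ hδ
end
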